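/- Let (M, Δ) be a Garside monoid. For every word w of length p ≥ 2 over Div(Δ), the word N̄^Δ_{δ̃_p}(w) is Δ-normal, has length p, and represents the same element of M as w (so it equals the unique Δ-normal word of length p representing that element). Here δ̃_p is defined inductively by δ̃_2 := 1 and δ̃_p := δ̃_{p−1}|p−1|…|2|1. -/

import Mathlib

/-- Left-divisibility: `f ≼ g` iff `f * c = g` for some `c`. -/
def LDvd {M : Type*} [Monoid M] (f g : M) : Prop := ∃ c, f * c = g

/-- Right-divisibility: `f` right-divides `g` iff `c * f = g` for some `c`. -/
def RDvd {M : Type*} [Monoid M] (f g : M) : Prop := ∃ c, c * f = g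

/-- A Garside monoid: a cancellative monoid `M` together with a Garside element `Δ`,
satisfying conditions (i)–(iv) of the definition. -/
structure GarsideMonoid (M : Type*) [Monoid M] where
  /-- The Garside element. -/
  Δ : M
  mul_left_cancel : ∀ a b c : M, a * b = a * c → b = c
  mul_right_cancel : ∀ a b c : M, b * a = c * a → b = c
  /-- (i) a superadditive length-type map. -/
  lam : M → ℕ
  lam_superadd : ∀ f g : M, lam f + lam g ≤ lam (f * g)
  lam_ne_zero : ∀ g : M, g ≠ 1 → lam g ≠ 0
  /-- (ii) any two elements admit a left-gcd. -/
  exists_left_gcd : ∀ f g : M, ∃ d, LDvd d f ∧ LDvd d g ∧ ∀ e, LDvd e f → LDvd e g → LDvd e d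
  /-- (ii) any two elements admit a right-lcm. -/
  exists_right_lcm : ∀ f g : M, ∃ m, LDvd f m ∧ LDvd g m ∧ ∀ e, LDvd f e → LDvd g e → LDvd m e
  /-- (ii) any two elements admit a right-gcd. -/
  exists_right_gcd : ∀ f g : M, ∃ d, RDvd d f ∧ RDvd d g ∧ ∀ e, RDvd e f → RDvd e g → RDvd e d
  /-- (ii) any two elements admit a left-lcm. -/
  exists_left_lcm : ∀ f g : M, ∃ m, RDvd f m ∧ RDvd g m ∧ ∀ e, RDvd f e → RDvd g e → RDvd m e
  /-- (iii) the left- and right-divisors of `Δ` coincide. -/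
  ldvd_iff_rdvd : ∀ d : M, LDvd d Δ ↔ RDvd d Δ
  /-- (iii) the divisors of `Δ` generate `M`. -/
  closure_div : Submonoid.closure {d : M | LDvd d Δ} = ⊤
  /-- (iv) `Div(Δ)` is finite. -/
  div_finite : {d : M | LDvd d Δ}.Finite

/-- A word `s_1|…|s_p` (with entries in `Div(Δ)`) is `Δ`-normal if, for every `i < p` and
every `s ∈ Div(Δ)`, `s_i ≺ s` implies that `s` does not left-divide `s_i s_{i+1} ⋯ s_p`. -/
def DNormal {M : Type*} [Monoid M] (G : GarsideMonoid M) (L : List M) : Prop :=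
  ∀ i : ℕ, i + 1 < L.length → ∀ s : M, LDvd s G.Δ →
    LDvd (L.getD i 1) s → L.getD i 1 ≠ s → ¬ LDvd s ((L.drop i).prod)

/-- Apply `F` to the entries at (1-based) positions `i, i+1` of a word. -/
def applyAt {α : Type*} (F : α × α → α × α) : ℕ → List α → List α
  | 1, a :: b :: t => (F (a, b)).1 :: (F (a, b)).2 :: t
  | n + 2, a :: t => a :: applyAt F (n + 1) t
  | _, l => l

/-- Apply `F` successively at the positions listed in `u` (leftmost entry first). -/
def applySeq {α : Type*} (F : α × α → α × α) (u : List ℕ) (w : List α) : List α :=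
  u.foldl (fun v i => applyAt F i v) w

/-- The sequence of positions `δ_p`: `δ_2 = 1` and `δ_p = sh(δ_{p−1})|1|2|…|p−1`,
where `sh` shifts every entry by `+1`. -/
def deltaSeq : ℕ → List ℕ
  | 0 => []
  | p + 1 => (deltaSeq p).map (· + 1) ++ (List.range p).map (· + 1)

/-- The sequence of positions `δ̃_p`: `δ̃_2 = 1` and `δ̃_p = δ̃_{p−1}|p−1|…|2|1`. -/
def deltaTildeSeq : ℕ → List ℕ
  | 0 => []
  | p + 1 => deltaTildeSeq p ++ ((List.range p).map (· + 1)).reverse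

/-!
Write `w = w' ++ [a]`. By induction, `δ̃_{p-1}` turns `w'` into a normal word `s₁|…|s_{p-1}`, and
the positions `p-1|…|1` then push `a` through it from right to left: `s_{p-1}|a` becomes
`t_{p-1}|y_{p-1}`, then `s_{p-2}|t_{p-1}` becomes `t_{p-2}|y_{p-2}`, and so on. By the domino rule
each new adjacent pair `y_i|y_{i+1}` is normal again. A word over `Div(Δ)` whose adjacent pairs are
all normal is normal, since a divisor of `Δ` dividing `s₁ s₂ ⋯ s_p` is absorbed into `s₁` one entry
at a time by taking right-lcms. Finally a normal word is determined by its length and product: its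
first entry is the largest divisor of `Δ` left-dividing the product.
-/

section Rewriting

variable {α : Type*} (F : α × α → α × α)

theorem applyAt_length : ∀ (i : ℕ) (w : List α), (applyAt F i w).length = w.length
  | 1, _ :: _ :: _ => rfl
  | n + 2, _ :: t => by simp [applyAt, applyAt_length (n + 1) t]
  | 0, _ | 1, [] | 1, [_] | _ + 2, [] => by simp [applyAt]

theorem applyAt_append : ∀ {i : ℕ} {v : List α} (t : List α), i < v.length →
    applyAt F i (v ++ t) = applyAt F i v ++ t
  | 0, _, _, _ => by simp [applyAt]
  | 1, _ :: _ :: _, _, _ => rfl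
  | n + 2, _ :: v, t, h => by
    simp [applyAt, applyAt_append t (by simp at h; omega : n + 1 < v.length)]
  | 1, [], _, h | 1, [_], _, h | _ + 2, [], _, h => by simp at h

theorem applyAt_length_add_append : ∀ (v : List α) (i : ℕ) (t : List α),
    applyAt F (v.length + (i + 1)) (v ++ t) = v ++ applyAt F (i + 1) t
  | [], _, _ => by simp
  | a :: v, i, t => by
    rw [List.length_cons, show v.length + 1 + (i + 1) = v.length + i + 2 by omega,
      List.cons_append, applyAt, Nat.add_assoc, applyAt_length_add_append v i t, List.cons_append]

theorem forall_mem_applyAt {P : α → Prop}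
    (hF : ∀ a b, P a → P b → P (F (a, b)).1 ∧ P (F (a, b)).2) :
    ∀ (i : ℕ) {w : List α}, (∀ x ∈ w, P x) → ∀ x ∈ applyAt F i w, P x
  | 1, a :: b :: _, hw => by
    simp only [applyAt, List.forall_mem_cons] at hw ⊢
    exact ⟨(hF a b hw.1 hw.2.1).1, (hF a b hw.1 hw.2.1).2, hw.2.2⟩
  | n + 2, _ :: _, hw => by
    simp only [applyAt, List.forall_mem_cons] at hw ⊢
    exact ⟨hw.1, forall_mem_applyAt hF (n + 1) hw.2⟩
  | 0, _, hw | 1, [_], hw => by simpa [applyAt] using hw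
  | 1, [], _ | _ + 2, [], _ => by simp [applyAt]

theorem prod_applyAt [Monoid α] {P : α → Prop}
    (hF : ∀ a b, P a → P b → (F (a, b)).1 * (F (a, b)).2 = a * b) :
    ∀ (i : ℕ) {w : List α}, (∀ x ∈ w, P x) → (applyAt F i w).prod = w.prod
  | 1, a :: b :: _, hw => by
    simp [applyAt, ← mul_assoc, hF a b (hw a (by simp)) (hw b (by simp))]
  | n + 2, _ :: _, hw => by
    simp [applyAt, prod_applyAt hF (n + 1) (fun x hx => hw x (List.mem_cons_of_mem _ hx))]
  | 0, _, _ | 1, [], _ | 1, [_], _ | _ + 2, [], _ => by simp [applyAt]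

theorem applySeq_cons (i : ℕ) (u : List ℕ) (w : List α) :
    applySeq F (i :: u) w = applySeq F u (applyAt F i w) := rfl

theorem applySeq_append (u u' : List ℕ) (w : List α) :
    applySeq F (u ++ u') w = applySeq F u' (applySeq F u w) :=
  List.foldl_append ..

theorem applySeq_length (u : List ℕ) (w : List α) : (applySeq F u w).length = w.length := by
  induction u generalizing w with
  | nil => rfl
  | cons i u ih => exact (ih _).trans (applyAt_length F i w)

theorem applySeq_append_of_forall_lt : ∀ {u : List ℕ} {v : List α} (t : List α),
    (∀ i ∈ u, i < v.length) → applySeq F u (v ++ t) = applySeq F u v ++ t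
  | [], _, _, _ => rfl
  | i :: u, v, t, h => by
    have hu : ∀ j ∈ u, j < (applyAt F i v).length := by
      simpa [applyAt_length] using fun j hj => h j (List.mem_cons_of_mem i hj)
    rw [applySeq_cons, applySeq_cons, applyAt_append F t (h i List.mem_cons_self),
      applySeq_append_of_forall_lt t hu]

theorem forall_mem_applySeq {P : α → Prop}
    (hF : ∀ a b, P a → P b → P (F (a, b)).1 ∧ P (F (a, b)).2) (u : List ℕ) {w : List α}
    (hw : ∀ x ∈ w, P x) : ∀ x ∈ applySeq F u w, P x := by
  induction u generalizing w with
  | nil => exact hw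
  | cons i u ih => exact ih (forall_mem_applyAt F hF i hw)

theorem prod_applySeq [Monoid α] {P : α → Prop}
    (hP : ∀ a b, P a → P b → P (F (a, b)).1 ∧ P (F (a, b)).2)
    (hF : ∀ a b, P a → P b → (F (a, b)).1 * (F (a, b)).2 = a * b) (u : List ℕ) {w : List α}
    (hw : ∀ x ∈ w, P x) : (applySeq F u w).prod = w.prod := by
  induction u generalizing w with
  | nil => rfl
  | cons i u ih => exact (ih (forall_mem_applyAt F hP i hw)).trans (prod_applyAt F hF i hw)

theorem lt_of_mem_deltaTildeSeq : ∀ {p i : ℕ}, i ∈ deltaTildeSeq p → i < p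
  | 0, _, h => by simp [deltaTildeSeq] at h
  | p + 1, _, h => by
    simp only [deltaTildeSeq, List.mem_append, List.mem_reverse, List.mem_map,
      List.mem_range] at h
    rcases h with h | ⟨j, hj, rfl⟩
    · exact (lt_of_mem_deltaTildeSeq h).trans p.lt_succ_self
    · omega

/-- The last pass `p|p-1|…|1` of `δ̃_{p+1}`, applied to a word `v` of length `p` followed by `a`. -/
def rightMulPass (v : List α) (a : α) : List α :=
  applySeq F ((List.range v.length).map (· + 1)).reverse (v ++ [a])

theorem rightMulPass_nil (a : α) : rightMulPass F [] a = [a] := rfl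

theorem rightMulPass_append_singleton (v : List α) (b a : α) :
    rightMulPass F (v ++ [b]) a = rightMulPass F v (F (b, a)).1 ++ [(F (b, a)).2] := by
  have hpos : ((List.range (v.length + 1)).map (· + 1)).reverse
      = (v.length + 1) :: ((List.range v.length).map (· + 1)).reverse := by
    simp [List.range_succ]
  have hlast : applyAt F (v.length + 1) (v ++ [b] ++ [a])
      = v ++ [(F (b, a)).1] ++ [(F (b, a)).2] := by
    simpa [applyAt] using applyAt_length_add_append F v 0 [b, a]
  rw [rightMulPass, List.length_append, List.length_singleton, hpos, applySeq_cons, hlast,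
    applySeq_append_of_forall_lt]
  · rfl
  · intro i hi
    simp only [List.mem_reverse, List.mem_map, List.mem_range] at hi
    simp only [List.length_append, List.length_singleton]
    omega

theorem applySeq_deltaTildeSeq_append_singleton (w : List α) (a : α) :
    applySeq F (deltaTildeSeq (w ++ [a]).length) (w ++ [a])
      = rightMulPass F (applySeq F (deltaTildeSeq w.length) w) a := by
  rw [List.length_append, List.length_singleton, deltaTildeSeq, applySeq_append,
    applySeq_append_of_forall_lt F [a] (fun _ hi => lt_of_mem_deltaTildeSeq hi), rightMulPass,
    applySeq_length]

end Rewriting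

section Divisibility

variable {M : Type*} [Monoid M]

theorem ldvd_mul_right (a b : M) : LDvd a (a * b) := ⟨b, rfl⟩

theorem LDvd.trans {a b c : M} : LDvd a b → LDvd b c → LDvd a c
  | ⟨u, hu⟩, ⟨v, hv⟩ => ⟨u * v, by rw [← mul_assoc, hu, hv]⟩

theorem LDvd.mul_left (c : M) {a b : M} : LDvd a b → LDvd (c * a) (c * b)
  | ⟨u, hu⟩ => ⟨u, by rw [mul_assoc, hu]⟩

theorem RDvd.trans {a b c : M} : RDvd a b → RDvd b c → RDvd a c
  | ⟨u, hu⟩, ⟨v, hv⟩ => ⟨v * u, by rw [mul_assoc, hu, hv]⟩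

end Divisibility

namespace GarsideMonoid

variable {M : Type*} [Monoid M]

theorem eq_one_of_mul_eq_one (G : GarsideMonoid M) {a b : M} (h : a * b = 1) : a = 1 := by
  by_contra ha
  have hlam := G.lam_superadd a b
  have hlam_one := G.lam_superadd 1 1
  rw [h] at hlam
  rw [one_mul] at hlam_one
  exact G.lam_ne_zero a ha (by omega)

theorem ldvd_antisymm (G : GarsideMonoid M) {a b : M} :
    LDvd a b → LDvd b a → a = b
  | ⟨u, hu⟩, ⟨v, hv⟩ => by
    have huv : u * v = 1 := G.mul_left_cancel a _ _ (by rw [← mul_assoc, hu, hv, mul_one])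
    rw [← hu, G.eq_one_of_mul_eq_one huv, mul_one]

theorem ldvd_of_mul_ldvd_mul (G : GarsideMonoid M) {a b c : M} :
    LDvd (a * b) (a * c) → LDvd b c
  | ⟨u, hu⟩ => ⟨u, G.mul_left_cancel a _ _ (by rw [← mul_assoc, hu])⟩

theorem ldvd_delta_of_rdvd (G : GarsideMonoid M) {a b : M} (hab : RDvd a b)
    (hb : LDvd b G.Δ) : LDvd a G.Δ := by
  rw [G.ldvd_iff_rdvd] at hb ⊢
  exact hab.trans hb

theorem mul_ldvd_delta_iff (G : GarsideMonoid M) {t u W : M} (hW : W * u = G.Δ) :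
    LDvd (t * u) G.Δ ↔ RDvd t W := by
  rw [G.ldvd_iff_rdvd]
  constructor
  · rintro ⟨c, hc⟩
    exact ⟨c, G.mul_right_cancel u _ _ (by rw [mul_assoc, hc, hW])⟩
  · rintro ⟨c, rfl⟩
    exact ⟨c, by rw [← mul_assoc, hW]⟩

theorem exists_mul_ldvd_delta_of_ldvd_mul (G : GarsideMonoid M) {a b s : M}
    (ha : LDvd a G.Δ) (hs : LDvd s G.Δ) (h : LDvd s (a * b)) :
    ∃ u, LDvd (a * u) G.Δ ∧ LDvd u b ∧ LDvd s (a * u) := by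
  obtain ⟨_, ⟨u, rfl⟩, hsm, hmin⟩ := G.exists_right_lcm a s
  exact ⟨u, hmin _ ha hs, G.ldvd_of_mul_ldvd_mul (hmin _ (ldvd_mul_right a b) h), hsm⟩

/-- If `p * e = q * y` and `p`, `q` have no nontrivial common left-divisor, then `p * e` is the
left-lcm of `e` and `y`. -/
theorem mul_rdvd_of_rdvd_of_rdvd (G : GarsideMonoid M) {p q e y W : M}
    (hpq : ∀ d, LDvd d p → LDvd d q → d = 1) (h : p * e = q * y) (he : RDvd e W)
    (hy : RDvd y W) : RDvd (p * e) W := by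
  obtain ⟨V, ⟨a, hae⟩, ⟨b, hby⟩, hVmin⟩ := G.exists_left_lcm e y
  obtain ⟨c, hc⟩ := hVmin (p * e) ⟨p, rfl⟩ ⟨q, h.symm⟩
  have hca : c * a = p := G.mul_right_cancel e _ _ (by rw [mul_assoc, hae, hc])
  have hcb : c * b = q := G.mul_right_cancel y _ _ (by rw [mul_assoc, hby, hc, h])
  rw [← hc, hpq c ⟨a, hca⟩ ⟨b, hcb⟩, one_mul]
  exact hVmin W he hy

end GarsideMonoid

section NormalPairs

variable {M : Type*} [Monoid M]

/-- Writing `a * ∂a = Δ`, the condition `a * u ≼ Δ` says `u ≼ ∂a`, so this is the usual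
characterisation `∂a ∧ b = 1` of normal pairs. -/
def IsNormalPair (G : GarsideMonoid M) (a b : M) : Prop :=
  ∀ u, LDvd (a * u) G.Δ → LDvd u b → u = 1

theorem IsNormalPair.ldvd_of_ldvd_mul {G : GarsideMonoid M} {a b s : M}
    (h : IsNormalPair G a b) (ha : LDvd a G.Δ) (hs : LDvd s G.Δ) (hsab : LDvd s (a * b)) :
    LDvd s a := by
  obtain ⟨u, hau, hub, hsu⟩ := G.exists_mul_ldvd_delta_of_ldvd_mul ha hs hsab
  rwa [h u hau hub, mul_one] at hsu

theorem DNormal.isNormalPair_prod_tail {G : GarsideMonoid M} {a b : M} {t : List M}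
    (h : DNormal G (a :: b :: t)) : IsNormalPair G a (b :: t).prod := by
  intro u hau hu
  by_contra hne
  refine h 0 (by simp) (a * u) hau (ldvd_mul_right a u) ?_ (by simpa using hu.mul_left a)
  intro hau_eq
  exact hne (G.mul_left_cancel a _ _ (by simpa using hau_eq.symm))

/-- The domino rule, for the squares `t₀ * y₁ = s₁ * t₁` and `t₁ * y₂ = s₂ * t₂`. -/
theorem isNormalPair_domino {G : GarsideMonoid M} {s₁ s₂ t₀ t₁ t₂ y₁ y₂ : M}
    (hs₁ : LDvd s₁ G.Δ) (hs₂ : LDvd s₂ G.Δ) (ht₀ : LDvd t₀ G.Δ) (ht₁ : LDvd t₁ G.Δ)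
    (ht₂ : LDvd t₂ G.Δ) (hs : IsNormalPair G s₁ s₂) (h₀ : IsNormalPair G t₀ y₁)
    (h₁ : IsNormalPair G t₁ y₂) (hsq₀ : t₀ * y₁ = s₁ * t₁) (hsq₁ : t₁ * y₂ = s₂ * t₂) :
    IsNormalPair G y₁ y₂ := by
  obtain ⟨e₀, rfl⟩ := h₀.ldvd_of_ldvd_mul ht₀ hs₁ (hsq₀ ▸ ldvd_mul_right s₁ t₁)
  have ht₁e : e₀ * y₁ = t₁ := G.mul_left_cancel s₁ _ _ (by rw [← mul_assoc, hsq₀])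
  obtain ⟨e₁, he₁⟩ := h₁.ldvd_of_ldvd_mul ht₁ hs₂ (hsq₁ ▸ ldvd_mul_right s₂ t₂)
  have ht₂e : e₁ * y₂ = t₂ := G.mul_left_cancel s₂ _ _ (by rw [← mul_assoc, he₁, hsq₁])
  have hcoprime : ∀ d, LDvd d s₂ → LDvd d e₀ → d = 1 := fun d hds₂ hde₀ =>
    hs d ((hde₀.mul_left s₁).trans ht₀) hds₂
  intro u hy₁u hu
  obtain ⟨c, hc⟩ := (G.ldvd_iff_rdvd _).mp hy₁u
  have hW : (c * y₁) * u = G.Δ := by rw [mul_assoc, hc]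
  have he₁u : LDvd (e₁ * u) G.Δ := (hu.mul_left e₁).trans (ht₂e ▸ ht₂)
  -- `t₁ = s₂ * e₁ = e₀ * y₁` is the left-lcm of `e₁` and `y₁`, which both right-divide `c * y₁`.
  have ht₁u : LDvd (t₁ * u) G.Δ := by
    rw [G.mul_ldvd_delta_iff hW, ← he₁]
    exact G.mul_rdvd_of_rdvd_of_rdvd hcoprime (he₁.trans ht₁e.symm)
      ((G.mul_ldvd_delta_iff hW).mp he₁u) ⟨c, rfl⟩
  exact h₁ u ht₁u hu

end NormalPairs

section NormalWords

variable {M : Type*} [Monoid M]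

theorem ldvd_head_of_isChain {G : GarsideMonoid M} :
    ∀ {x : M} {t : List M}, (∀ z ∈ x :: t, LDvd z G.Δ) →
      List.IsChain (IsNormalPair G) (x :: t) →
      ∀ {s : M}, LDvd s G.Δ → LDvd s (x :: t).prod → LDvd s x
  | _, [], _, _, _, _, hs => by simpa using hs
  | x, y :: r, hmem, hch, s, hsΔ, hs => by
    rw [List.isChain_cons_cons] at hch
    have hxΔ : LDvd x G.Δ := hmem x (by simp)
    obtain ⟨u, hxu, hu, hsu⟩ :=
      G.exists_mul_ldvd_delta_of_ldvd_mul hxΔ hsΔ (by simpa using hs)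
    have huy : LDvd u y := ldvd_head_of_isChain (fun z hz => hmem z (List.mem_cons_of_mem x hz))
      hch.2 (G.ldvd_delta_of_rdvd ⟨x, rfl⟩ hxu) hu
    rwa [hch.1 u hxu huy, mul_one] at hsu

theorem dNormal_of_isChain {G : GarsideMonoid M} {w : List M} (hw : ∀ x ∈ w, LDvd x G.Δ)
    (hch : List.IsChain (IsNormalPair G) w) : DNormal G w := by
  intro i hi s hsΔ hws hne hs
  have hdrop : w.drop i = w.getD i 1 :: w.drop (i + 1) := by
    rw [List.getD_eq_getElem w 1 (by omega)]
    exact List.drop_eq_getElem_cons (by omega)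
  rw [hdrop] at hs
  refine hne (G.ldvd_antisymm hws (ldvd_head_of_isChain ?_ (hdrop ▸ hch.drop i) hsΔ hs))
  rw [← hdrop]
  exact fun z hz => hw z (List.mem_of_mem_drop hz)

theorem DNormal.tail {G : GarsideMonoid M} {a : M} {t : List M} (h : DNormal G (a :: t)) :
    DNormal G t := fun i hi s hsΔ hts hne hs =>
  h (i + 1) (by simpa using hi) s hsΔ (by simpa using hts) (by simpa using hne) (by simpa using hs)

theorem eq_of_dNormal_of_prod_eq {G : GarsideMonoid M} :
    ∀ {v w : List M}, (∀ x ∈ v, LDvd x G.Δ) → (∀ x ∈ w, LDvd x G.Δ) → DNormal G v →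
      DNormal G w → v.length = w.length → v.prod = w.prod → v = w
  | [], [], _, _, _, _, _, _ => rfl
  | [a], [b], _, _, _, _, _, hprod => by simpa using hprod
  | a :: c :: v, b :: d :: w, hv, hw, hnv, hnw, hlen, hprod => by
    have haΔ : LDvd a G.Δ := hv a (by simp)
    have hbΔ : LDvd b G.Δ := hw b (by simp)
    have hab : a = b := G.ldvd_antisymm
      (hnw.isNormalPair_prod_tail.ldvd_of_ldvd_mul hbΔ haΔ
        (by rw [← List.prod_cons, ← hprod]; exact ldvd_mul_right a _))
      (hnv.isNormalPair_prod_tail.ldvd_of_ldvd_mul haΔ hbΔ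
        (by rw [← List.prod_cons, hprod]; exact ldvd_mul_right b _))
    subst hab
    rw [eq_of_dNormal_of_prod_eq (fun x hx => hv x (List.mem_cons_of_mem a hx))
      (fun x hx => hw x (List.mem_cons_of_mem a hx)) hnv.tail hnw.tail (by simpa using hlen)
      (G.mul_left_cancel a _ _ (by simpa using hprod))]
  | [], _ :: _, _, _, _, _, hlen, _ | _ :: _, [], _, _, _, _, hlen, _
  | [_], _ :: _ :: _, _, _, _, _, hlen, _ | _ :: _ :: _, [_], _, _, _, _, hlen, _ => by
    simp at hlen

end NormalWords

section Normalization

variable {M : Type*} [Monoid M]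

def IsNormalizer (G : GarsideMonoid M) (NN : M × M → M × M) : Prop :=
  ∀ s t : M, LDvd s G.Δ → LDvd t G.Δ →
    LDvd (NN (s, t)).1 G.Δ ∧ LDvd (NN (s, t)).2 G.Δ ∧
    (NN (s, t)).1 * (NN (s, t)).2 = s * t ∧ DNormal G [(NN (s, t)).1, (NN (s, t)).2]

theorem IsNormalizer.forall_mem_applySeq {G : GarsideMonoid M} {NN : M × M → M × M}
    (hNN : IsNormalizer G NN) (u : List ℕ) {w : List M} (hw : ∀ x ∈ w, LDvd x G.Δ) :
    ∀ x ∈ applySeq NN u w, LDvd x G.Δ :=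
  _root_.forall_mem_applySeq NN (fun s t hs ht => ⟨(hNN s t hs ht).1, (hNN s t hs ht).2.1⟩) u hw

theorem IsNormalizer.prod_applySeq {G : GarsideMonoid M} {NN : M × M → M × M}
    (hNN : IsNormalizer G NN) (u : List ℕ) {w : List M} (hw : ∀ x ∈ w, LDvd x G.Δ) :
    (applySeq NN u w).prod = w.prod :=
  _root_.prod_applySeq NN (fun s t hs ht => ⟨(hNN s t hs ht).1, (hNN s t hs ht).2.1⟩)
    (fun s t hs ht => (hNN s t hs ht).2.2.1) u hw

theorem IsNormalizer.isChain_rightMulPass {G : GarsideMonoid M} {NN : M × M → M × M}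
    (hNN : IsNormalizer G NN) {v : List M} (hv : ∀ x ∈ v, LDvd x G.Δ)
    (hch : List.IsChain (IsNormalPair G) v) {a : M} (ha : LDvd a G.Δ) :
    List.IsChain (IsNormalPair G) (rightMulPass NN v a) := by
  induction v using List.reverseRecOn generalizing a with
  | nil => exact List.isChain_singleton a
  | append_singleton v b ih =>
    have hb : LDvd b G.Δ := hv b (by simp)
    obtain ⟨hx, -, hsq, hxy⟩ := hNN b a hb ha
    rw [rightMulPass_append_singleton]
    rcases List.eq_nil_or_concat' v with rfl | ⟨v, b', rfl⟩
    · simpa [rightMulPass_nil] using hxy.isNormalPair_prod_tail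
    · have hb' : LDvd b' G.Δ := hv b' (by simp)
      obtain ⟨hx', -, hsq', hxy'⟩ := hNN b' _ hb' hx
      have hprev := ih (fun z hz => hv z (List.mem_append_left _ hz)) hch.left_of_append hx
      rw [rightMulPass_append_singleton] at hprev
      have hb'b : IsNormalPair G b' b := (List.isChain_append.mp hch).2.2 b' (by simp) b (by simp)
      rw [rightMulPass_append_singleton, List.append_assoc, List.singleton_append,
        List.isChain_append_cons_cons]
      refine ⟨hprev, ?_, List.isChain_singleton _⟩
      exact isNormalPair_domino hb' hb hx' hx ha hb'b
        (by simpa using hxy'.isNormalPair_prod_tail) (by simpa using hxy.isNormalPair_prod_tail)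
        hsq' hsq

theorem IsNormalizer.isChain_applySeq_deltaTildeSeq {G : GarsideMonoid M}
    {NN : M × M → M × M} (hNN : IsNormalizer G NN) {w : List M}
    (hw : ∀ x ∈ w, LDvd x G.Δ) :
    List.IsChain (IsNormalPair G) (applySeq NN (deltaTildeSeq w.length) w) := by
  induction w using List.reverseRecOn with
  | nil => exact List.isChain_nil
  | append_singleton w a ih =>
    have hw' : ∀ x ∈ w, LDvd x G.Δ := fun x hx => hw x (by simp [hx])
    rw [applySeq_deltaTildeSeq_append_singleton]
    exact hNN.isChain_rightMulPass (hNN.forall_mem_applySeq _ hw') (ih hw') (hw a (by simp))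

end Normalization

theorem garsideMonoid_deltaTildeSeq_recipe_general {M : Type*} [Monoid M] (G : GarsideMonoid M)
    (NN : M × M → M × M)
    (hNN : ∀ s t : M, LDvd s G.Δ → LDvd t G.Δ →
      LDvd (NN (s, t)).1 G.Δ ∧ LDvd (NN (s, t)).2 G.Δ ∧
      (NN (s, t)).1 * (NN (s, t)).2 = s * t ∧ DNormal G [(NN (s, t)).1, (NN (s, t)).2])
    (w : List M) (hw : ∀ x ∈ w, LDvd x G.Δ) :
    (∀ x ∈ applySeq NN (deltaTildeSeq w.length) w, LDvd x G.Δ) ∧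
    DNormal G (applySeq NN (deltaTildeSeq w.length) w) ∧
    (applySeq NN (deltaTildeSeq w.length) w).length = w.length ∧
    (applySeq NN (deltaTildeSeq w.length) w).prod = w.prod ∧
    (∀ v : List M, (∀ x ∈ v, LDvd x G.Δ) → DNormal G v → v.length = w.length →
      v.prod = w.prod → v = applySeq NN (deltaTildeSeq w.length) w) := by
  have hNN' : IsNormalizer G NN := hNN
  have hmem := hNN'.forall_mem_applySeq (deltaTildeSeq w.length) hw
  have hnormal := dNormal_of_isChain hmem (hNN'.isChain_applySeq_deltaTildeSeq hw)
  have hlen := applySeq_length NN (deltaTildeSeq w.length) w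
  have hprod := hNN'.prod_applySeq (deltaTildeSeq w.length) hw
  exact ⟨hmem, hnormal, hlen, hprod, fun v hv hnv hvlen hvprod =>
    eq_of_dNormal_of_prod_eq hv hmem hnv hnormal (hvlen.trans hlen.symm)
      (hvprod.trans hprod.symm)⟩

/-- In a Garside monoid `(M, Δ)`, for every word `w` of length `p ≥ 2`
over `Div(Δ)`, the word `N̄^Δ_{δ̃_p}(w)` is `Δ`-normal, has length `p`, and represents the
same element of `M` as `w` (hence equals the unique `Δ`-normal word of length `p`
representing that element). -/
theorem garsideMonoid_deltaTildeSeq_recipe {M : Type*} [Monoid M] (G : GarsideMonoid M)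
    (NN : M × M → M × M)
    (hNN : ∀ s t : M, LDvd s G.Δ → LDvd t G.Δ →
      LDvd (NN (s, t)).1 G.Δ ∧ LDvd (NN (s, t)).2 G.Δ ∧
      (NN (s, t)).1 * (NN (s, t)).2 = s * t ∧ DNormal G [(NN (s, t)).1, (NN (s, t)).2])
    (w : List M) (hw : ∀ x ∈ w, LDvd x G.Δ) (hp : 2 ≤ w.length) :
    (∀ x ∈ applySeq NN (deltaTildeSeq w.length) w, LDvd x G.Δ) ∧
    DNormal G (applySeq NN (deltaTildeSeq w.length) w) ∧
    (applySeq NN (deltaTildeSeq w.length) w).length = w.length ∧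
    (applySeq NN (deltaTildeSeq w.length) w).prod = w.prod ∧
    (∀ v : List M, (∀ x ∈ v, LDvd x G.Δ) → DNormal G v → v.length = w.length →
      v.prod = w.prod → v = applySeq NN (deltaTildeSeq w.length) w) :=
  garsideMonoid_deltaTildeSeq_recipe_general G NN hNN w hw
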